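/- arXiv:0709.1247 — 2 statements merged into one kernel-verified Lean document; each statement's English description precedes it below -/
import Mathlib

section
/- Let β be an m×k integer matrix with all entries in {-1,0,1} and Hilbert–Schmidt norm at most S. Suppose y ∈ ℝ^m lies in the column span of β. Then there exists d ∈ ℝ^k with β d = y and Σ_j |d_j| ≤ k² S^(k-1) Σ_i |y_i|. -/
open Finset Matrix
open scoped RealInnerProductSpace

/-- Hadamard's inequality (rows version) for real matrices. -/
lemma hadamard_rows {n : ℕ} (M : Matrix (Fin n) (Fin n) ℝ) :
    |M.det| ≤ ∏ i, Real.sqrt (∑ j, M i j ^ 2) := by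
  classical
  haveI : WellFoundedLT (Fin n) := inferInstance
  have hcard : Module.finrank ℝ (EuclideanSpace ℝ (Fin n)) = Fintype.card (Fin n) :=
    finrank_euclideanSpace
  set f : Fin n → EuclideanSpace ℝ (Fin n) :=
    fun i => (WithLp.equiv 2 (Fin n → ℝ)).symm (M i) with hf
  have hnorm : ∀ i, ‖f i‖ = Real.sqrt (∑ j, M i j ^ 2) := by
    intro i
    rw [EuclideanSpace.norm_eq]
    congr 1
    refine Finset.sum_congr rfl fun j _ => ?_
    rw [Real.norm_eq_abs, sq_abs]
    rfl
  set g : OrthonormalBasis (Fin n) ℝ (EuclideanSpace ℝ (Fin n)) :=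
    InnerProductSpace.gramSchmidtOrthonormalBasis hcard f with hg
  set eb := EuclideanSpace.basisFun (Fin n) ℝ with he
  have h1 : eb.toBasis.det f = Mᵀ.det := by
    rw [Module.Basis.det_apply]
    congr 1
  have h2 : eb.toBasis.det ⇑g.toBasis • g.toBasis.det = eb.toBasis.det :=
    (eb.toBasis.det.eq_smul_basis_det g.toBasis).symm
  have h3 : |eb.toBasis.det f| = |g.toBasis.det f| := by
    rw [← h2]
    have h4 := eb.det_to_matrix_orthonormalBasis g
    simp only [AlternatingMap.smul_apply, smul_eq_mul, abs_mul,
      OrthonormalBasis.coe_toBasis]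
    rw [← Real.norm_eq_abs (eb.toBasis.det ⇑g), h4, one_mul]
  calc |M.det| = |Mᵀ.det| := by rw [Matrix.det_transpose]
    _ = |g.toBasis.det f| := by rw [← h1, h3]
    _ = abs (∏ i, (inner ℝ (g i) (f i) : ℝ)) := by rw [InnerProductSpace.gramSchmidtOrthonormalBasis_det]
    _ ≤ ∏ i, ‖f i‖ := by
        rw [Finset.abs_prod]
        refine Finset.prod_le_prod (fun i _ => abs_nonneg _) fun i _ => ?_
        calc |(inner ℝ (g i) (f i) : ℝ)| ≤ ‖g i‖ * ‖f i‖ := abs_real_inner_le_norm _ _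
          _ = ‖f i‖ := by rw [g.orthonormal.1 i, one_mul]
    _ = ∏ i, Real.sqrt (∑ j, M i j ^ 2) := Finset.prod_congr rfl fun i _ => hnorm i

/-- Every vector in the column span is the image of a vector whose support indexes
linearly independent columns. -/
lemma exists_basic {m k : ℕ} (A : Matrix (Fin m) (Fin k) ℝ) :
    ∀ (n : ℕ) (d : Fin k → ℝ), (Finset.univ.filter fun j => d j ≠ 0).card ≤ n →
      ∃ d' : Fin k → ℝ, A.mulVec d' = A.mulVec d ∧
        (∀ j, d' j ≠ 0 → d j ≠ 0) ∧
        LinearIndependent ℝ (fun j : {j : Fin k // d' j ≠ 0} => fun i => A i (j : Fin k)) := by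
  classical
  intro n
  induction n with
  | zero =>
      intro d hd
      have hzero : ∀ j, d j = 0 := by
        intro j
        by_contra hj
        have hmem : j ∈ Finset.univ.filter fun j => d j ≠ 0 := by simp [hj]
        have := Finset.card_pos.mpr ⟨j, hmem⟩
        omega
      haveI : IsEmpty {j : Fin k // d j ≠ 0} := ⟨fun j => j.2 (hzero j.1)⟩
      exact ⟨d, rfl, fun j h => h, linearIndependent_empty_type⟩
  | succ n ih =>
      intro d hd
      by_cases h : LinearIndependent ℝ (fun j : {j : Fin k // d j ≠ 0} => fun i => A i (j : Fin k))
      · exact ⟨d, rfl, fun j h => h, h⟩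
      · rw [Fintype.not_linearIndependent_iff] at h
        obtain ⟨g, hg, j₀, hj₀⟩ := h
        set c : Fin k → ℝ := fun j => if h : d j ≠ 0 then g ⟨j, h⟩ else 0 with hc
        have hcj : ∀ (j : {j : Fin k // d j ≠ 0}), c (j : Fin k) = g j := by
          intro j
          rw [hc]
          simp only [j.2, dif_pos, ne_eq, not_false_eq_true]
        have hc0 : A.mulVec c = 0 := by
          funext i
          have hgi : ∑ j : {j : Fin k // d j ≠ 0}, g j * A i (j : Fin k) = 0 := by
            have := congrFun hg i
            simpa [Finset.sum_apply] using this
          have e1 : ∑ j : Fin k, A i j * c j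
              = ∑ j ∈ Finset.univ.filter (fun j => d j ≠ 0), A i j * c j := by
            refine (Finset.sum_filter_of_ne fun j _ hne => ?_).symm
            by_contra hdj
            apply hne
            rw [hc]
            simp [hdj]
          have e2 : ∑ j ∈ Finset.univ.filter (fun j => d j ≠ 0), A i j * c j
              = ∑ j : {j : Fin k // d j ≠ 0}, A i (j : Fin k) * c (j : Fin k) := by
            refine Finset.sum_subtype _ (fun x => ?_) _
            simp
          have e0 : A.mulVec c i = ∑ j : Fin k, A i j * c j := by
            simp [Matrix.mulVec, dotProduct]
          have e3 : ∑ j : {j : Fin k // d j ≠ 0}, A i (j : Fin k) * c (j : Fin k)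
              = ∑ j : {j : Fin k // d j ≠ 0}, g j * A i (j : Fin k) :=
            Finset.sum_congr rfl fun j _ => by rw [hcj j, mul_comm]
          rw [e0, e1, e2, e3, hgi]
          simp
        have hcj₀ : c (j₀ : Fin k) ≠ 0 := by rw [hcj j₀]; exact hj₀
        set d₂ : Fin k → ℝ := fun j => d j - (d (j₀ : Fin k) / c (j₀ : Fin k)) * c j with hd₂
        have hmv : A.mulVec d₂ = A.mulVec d := by
          have : d₂ = d - (d (j₀ : Fin k) / c (j₀ : Fin k)) • c := by
            funext j; simp [hd₂, smul_eq_mul]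
          rw [this, Matrix.mulVec_sub, Matrix.mulVec_smul, hc0, smul_zero, sub_zero]
        have hsupp : ∀ j, d₂ j ≠ 0 → d j ≠ 0 := by
          intro j hj
          by_contra hdj
          apply hj
          have : c j = 0 := by rw [hc]; simp [hdj]
          simp [hd₂, hdj, this]
        have hj₀zero : d₂ (j₀ : Fin k) = 0 := by
          simp only [hd₂]
          field_simp
          ring
        have hcard : (Finset.univ.filter fun j => d₂ j ≠ 0).card ≤ n := by
          have hss : (Finset.univ.filter fun j => d₂ j ≠ 0)
              ⊆ (Finset.univ.filter fun j => d j ≠ 0).erase (j₀ : Fin k) := by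
            intro j hj
            rw [Finset.mem_filter] at hj
            rw [Finset.mem_erase, Finset.mem_filter]
            refine ⟨?_, Finset.mem_univ _, hsupp j hj.2⟩
            rintro rfl
            exact hj.2 hj₀zero
          have h1 := Finset.card_le_card hss
          have hj₀mem : (j₀ : Fin k) ∈ Finset.univ.filter fun j => d j ≠ 0 := by
            simp [j₀.2]
          have h2 := Finset.card_erase_of_mem hj₀mem
          omega
        obtain ⟨d', hd', hsupp', hli⟩ := ih d₂ hcard
        exact ⟨d', hd'.trans hmv, fun j hj => hsupp j (hsupp' j hj), hli⟩

set_option maxHeartbeats 2000000 in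
/-- Linear-algebra filling lemma: if `β` is an integer matrix with entries in
{-1,0,1} and Hilbert–Schmidt norm at most `S`, and `y` lies in the real column
span of `β`, then `y = β d` for some `d` with `ℓ¹`-norm at most
`k² S^(k-1)` times the `ℓ¹`-norm of `y`. -/
theorem stmt4 (m k : ℕ) (β : Matrix (Fin m) (Fin k) ℤ)
    (hentries : ∀ i j, β i j = -1 ∨ β i j = 0 ∨ β i j = 1)
    (S : ℝ) (hS : Real.sqrt (∑ i, ∑ j, ((β i j : ℝ)) ^ 2) ≤ S)
    (y : Fin m → ℝ)
    (hy : ∃ d₀ : Fin k → ℝ, (β.map (Int.cast : ℤ → ℝ)).mulVec d₀ = y) :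
    ∃ d : Fin k → ℝ, (β.map (Int.cast : ℤ → ℝ)).mulVec d = y ∧
      ∑ j, |d j| ≤ (k : ℝ) ^ 2 * S ^ (k - 1) * ∑ i, |y i| := by
  classical
  obtain ⟨d₀, hd₀⟩ := hy
  set A : Matrix (Fin m) (Fin k) ℝ := β.map (Int.cast : ℤ → ℝ) with hA
  obtain ⟨d, hdy, hdsupp, hli⟩ := exists_basic A _ d₀ le_rfl
  rw [hd₀] at hdy
  have hS0 : 0 ≤ S := le_trans (Real.sqrt_nonneg _) hS
  have hy0 : 0 ≤ ∑ i, |y i| := Finset.sum_nonneg fun i _ => abs_nonneg _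
  set s : Finset (Fin k) := Finset.univ.filter (fun j => d j ≠ 0) with hs
  set r := s.card with hr
  rcases Nat.eq_zero_or_pos r with hr0 | hrpos
  · -- degenerate case : d = 0, y = 0
    have hd0 : ∀ j, d j = 0 := by
      intro j
      by_contra hj
      have hmem : j ∈ s := by simp [hs, hj]
      have := Finset.card_pos.mpr ⟨j, hmem⟩
      omega
    have hyzero : y = 0 := by
      rw [← hdy]
      funext i
      simp [Matrix.mulVec, dotProduct, hd0]
    refine ⟨0, by rw [hyzero, Matrix.mulVec_zero], ?_⟩
    simp [hyzero]
  · have hrk : r ≤ k := by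
      have := Finset.card_le_univ s
      simpa [hr] using this
    have hk1 : 1 ≤ k := le_trans hrpos hrk
    -- column selection
    set γ : Fin r → Fin k := fun t => s.orderEmbOfFin hr.symm t with hγ
    have hγinj : Function.Injective γ := fun a b hab => (s.orderEmbOfFin hr.symm).injective hab
    have hγmem : ∀ t, γ t ∈ s := fun t => Finset.orderEmbOfFin_mem s hr.symm t
    have hγd : ∀ t, d (γ t) ≠ 0 := by
      intro t
      have := hγmem t
      rw [hs, Finset.mem_filter] at this
      exact this.2
    have himage : Finset.image γ Finset.univ = s := by
      apply Finset.coe_injective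
      rw [Finset.coe_image, Finset.coe_univ, Set.image_univ]
      exact Finset.range_orderEmbOfFin s hr.symm
    set N : Matrix (Fin m) (Fin r) ℝ := fun i t => A i (γ t) with hN
    have hNcols : LinearIndependent ℝ (fun t : Fin r => (fun i => N i t)) := by
      have hinj : Function.Injective
          (fun t : Fin r => (⟨γ t, hγd t⟩ : {j : Fin k // d j ≠ 0})) := by
        intro a a' hab
        have h6 := congrArg (fun z : {j : Fin k // d j ≠ 0} => (z : Fin k)) hab
        exact hγinj h6
      have h7 := hli.comp (fun t : Fin r => (⟨γ t, hγd t⟩ : {j : Fin k // d j ≠ 0})) hinj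
      exact h7
    -- rows of N span everything
    have hrowspan : Submodule.span ℝ (Set.range N) = ⊤ := by
      have hrankN : N.rank = r := by
        rw [Matrix.rank_eq_finrank_span_cols]
        have hNT : LinearIndependent ℝ N.col := hNcols
        rw [finrank_span_eq_card hNT, Fintype.card_fin]
      have hrankNT : Nᵀ.rank = r := by rw [Matrix.rank_transpose, hrankN]
      have h5 : Nᵀ.rank = Module.finrank ℝ (Submodule.span ℝ (Set.range Nᵀᵀ)) :=
        Matrix.rank_eq_finrank_span_cols Nᵀ
      rw [Matrix.transpose_transpose] at h5
      apply Submodule.eq_top_of_finrank_eq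
      rw [← h5, hrankNT, Module.finrank_fintype_fun_eq_card, Fintype.card_fin]
    obtain ⟨b, hbsub, hbspan, hbli⟩ := exists_linearIndependent ℝ (Set.range N)
    rw [hrowspan] at hbspan
    have hbfin : b.Finite := Set.Finite.subset (Set.finite_range N) hbsub
    haveI := hbfin.fintype
    have bB : Module.Basis b ℝ (Fin r → ℝ) := Module.Basis.mk hbli (by rw [Subtype.range_coe, hbspan])
    have hbcard : Fintype.card b = r := by
      have h1 := Module.finrank_eq_card_basis bB
      rw [Module.finrank_fintype_fun_eq_card, Fintype.card_fin] at h1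
      omega
    set eqv : Fin r ≃ b := (Fintype.equivFinOfCardEq hbcard).symm with heqv
    have hchoose : ∀ t : Fin r, ∃ i : Fin m, N i = ((eqv t : b) : Fin r → ℝ) :=
      fun t => hbsub (eqv t).2
    set ρ : Fin r → Fin m := fun t => (hchoose t).choose with hρdef
    have hρ : ∀ t, N (ρ t) = ((eqv t : b) : Fin r → ℝ) := fun t => (hchoose t).choose_spec
    have hρinj : Function.Injective ρ := by
      intro a a' hab
      have h6 : ((eqv a : b) : Fin r → ℝ) = ((eqv a' : b) : Fin r → ℝ) := by
        rw [← hρ a, ← hρ a', hab]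
      exact eqv.injective (Subtype.ext h6)
    set Q : Matrix (Fin r) (Fin r) ℝ := fun t t' => N (ρ t) t' with hQ
    have hQrows : LinearIndependent ℝ (fun t : Fin r => Q t) := by
      have h7 : (fun t : Fin r => Q t) = (fun x : b => (x : Fin r → ℝ)) ∘ eqv := by
        funext t; exact hρ t
      rw [h7]
      exact hbli.comp eqv eqv.injective
    have hQunit : IsUnit Q := Matrix.linearIndependent_rows_iff_isUnit.mp hQrows
    have hQdetunit : IsUnit Q.det := (Matrix.isUnit_iff_isUnit_det Q).mp hQunit
    have hQdetne : Q.det ≠ 0 := hQdetunit.ne_zero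
    -- integrality of the determinant
    have hQint : Q = (β.submatrix ρ γ).map (Int.cast : ℤ → ℝ) := by
      ext t t'
      simp [hQ, hN, hA, Matrix.submatrix, Matrix.map]
    have hQdet : Q.det = (((β.submatrix ρ γ).det : ℤ) : ℝ) := by
      rw [hQint]
      exact (RingHom.map_det (Int.castRingHom ℝ) (β.submatrix ρ γ)).symm
    have hdet1 : (1 : ℝ) ≤ |Q.det| := by
      rw [hQdet]
      have hne : (β.submatrix ρ γ).det ≠ 0 := by
        intro h0
        apply hQdetne
        rw [hQdet, h0]
        simp
      have := Int.one_le_abs hne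
      calc (1:ℝ) = ((1:ℤ):ℝ) := by norm_num
        _ ≤ ((|(β.submatrix ρ γ).det| : ℤ) : ℝ) := by exact_mod_cast this
        _ = |(((β.submatrix ρ γ).det : ℤ) : ℝ)| := by push_cast; ring
    haveI : Nonempty (Fin r) := ⟨⟨0, hrpos⟩⟩
    -- 1 ≤ S
    have hSsq : (1:ℝ) ≤ ∑ i, ∑ j, ((β i j : ℝ))^2 := by
      obtain ⟨i0, j0, hij⟩ : ∃ i j, β i j ≠ 0 := by
        by_contra hno
        push_neg at hno
        have hQ0 : Q = 0 := by
          rw [hQint]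
          ext t t'
          simp [Matrix.submatrix, Matrix.map, hno]
        apply hQdetne
        rw [hQ0, Matrix.det_zero]
      have h1 : (1:ℝ) ≤ ((β i0 j0 : ℝ))^2 := by
        rcases hentries i0 j0 with h | h | h
        · rw [h]; norm_num
        · exact absurd h hij
        · rw [h]; norm_num
      calc (1:ℝ) ≤ ((β i0 j0:ℝ))^2 := h1
        _ ≤ ∑ j, ((β i0 j : ℝ))^2 :=
            Finset.single_le_sum (f := fun j => ((β i0 j : ℝ))^2)
              (fun j _ => sq_nonneg _) (Finset.mem_univ _)
        _ ≤ ∑ i, ∑ j, ((β i j : ℝ))^2 :=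
            Finset.single_le_sum (f := fun i => ∑ j, ((β i j : ℝ))^2)
              (fun i _ => Finset.sum_nonneg fun j _ => sq_nonneg _)
              (Finset.mem_univ _)
    have hS1 : (1:ℝ) ≤ S := by
      refine le_trans ?_ hS
      rw [show (1:ℝ) = Real.sqrt 1 by rw [Real.sqrt_one]]
      exact Real.sqrt_le_sqrt hSsq
    -- row bound
    have hrowS : ∀ i : Fin m, Real.sqrt (∑ t' : Fin r, ((β i (γ t') : ℝ))^2) ≤ S := by
      intro i
      refine le_trans (Real.sqrt_le_sqrt ?_) hS
      calc ∑ t' : Fin r, ((β i (γ t') : ℝ))^2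
          = ∑ j ∈ Finset.image γ Finset.univ, ((β i j : ℝ))^2 :=
            (Finset.sum_image (f := fun j => ((β i j : ℝ))^2) (g := γ)
              (fun a _ a' _ hab => hγinj hab)).symm
        _ ≤ ∑ j : Fin k, ((β i j : ℝ))^2 :=
            Finset.sum_le_sum_of_subset_of_nonneg (Finset.subset_univ _)
              (fun j _ _ => sq_nonneg _)
        _ ≤ ∑ i', ∑ j, ((β i' j : ℝ))^2 :=
            Finset.single_le_sum (f := fun i' => ∑ j, ((β i' j : ℝ))^2)
              (fun i' _ => Finset.sum_nonneg fun j _ => sq_nonneg _)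
              (Finset.mem_univ _)
    -- inverse entry bound
    have hQinv : ∀ t t' : Fin r, |Q⁻¹ t t'| ≤ S ^ (k - 1) := by
      intro t t'
      rw [Matrix.inv_def, Matrix.smul_apply, smul_eq_mul, abs_mul]
      have h1 : |Ring.inverse Q.det| ≤ 1 := by
        rw [Ring.inverse_eq_inv', abs_inv]
        rw [inv_le_one_iff₀]
        right
        exact hdet1
      have h2 : |Q.adjugate t t'| ≤ S ^ (k-1) := by
        rw [Matrix.adjugate_apply]
        refine le_trans (hadamard_rows _) ?_
        set P := Q.updateRow t' (Pi.single t 1) with hP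
        have hPt' : Real.sqrt (∑ j, P t' j ^ 2) = 1 := by
          have h8 : ∀ j, P t' j = if j = t then 1 else 0 := by
            intro j; rw [hP, Matrix.updateRow_self, Pi.single_apply]
          rw [Finset.sum_congr rfl fun j _ => by rw [h8 j]]
          rw [Finset.sum_congr rfl fun j _ => (apply_ite (fun x : ℝ => x ^ 2) _ _ _)]
          simp
        have hPx : ∀ x : Fin r, x ≠ t' → Real.sqrt (∑ j, P x j ^ 2) ≤ S := by
          intro x hx
          have h9 : ∀ j, P x j = ((β (ρ x) (γ j) : ℝ)) := by
            intro j; rw [hP, Matrix.updateRow_ne hx]; rfl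
          rw [Finset.sum_congr rfl fun j _ => by rw [h9 j]]
          exact hrowS (ρ x)
        calc ∏ x, Real.sqrt (∑ j, P x j ^2)
            = (∏ x ∈ Finset.univ.erase t', Real.sqrt (∑ j, P x j ^2))
                * Real.sqrt (∑ j, P t' j ^2) :=
              (Finset.prod_erase_mul _ _ (Finset.mem_univ t')).symm
          _ ≤ (∏ _x ∈ Finset.univ.erase t', S) * 1 := by
              refine mul_le_mul ?_ (le_of_eq hPt') (Real.sqrt_nonneg _)
                (Finset.prod_nonneg fun x _ => hS0)
              refine Finset.prod_le_prod (fun x _ => Real.sqrt_nonneg _)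
                fun x hx => hPx x (Finset.ne_of_mem_erase hx)
          _ = S ^ (r - 1) := by
              rw [Finset.prod_const, mul_one, Finset.card_erase_of_mem (Finset.mem_univ _),
                Finset.card_univ, Fintype.card_fin]
          _ ≤ S ^ (k - 1) := pow_le_pow_right₀ hS1 (by omega)
      calc |Ring.inverse Q.det| * |Q.adjugate t t'| ≤ 1 * (S ^ (k-1)) :=
            mul_le_mul h1 h2 (abs_nonneg _) zero_le_one
        _ = S ^ (k-1) := one_mul _
    -- solving the restricted system
    have hsolve : Q.mulVec (fun t' => d (γ t')) = fun t => y (ρ t) := by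
      funext t
      have hrow := congrFun hdy (ρ t)
      have e0 : A.mulVec d (ρ t) = ∑ j : Fin k, A (ρ t) j * d j := by
        simp [Matrix.mulVec, dotProduct]
      have e1 : ∑ j : Fin k, A (ρ t) j * d j
          = ∑ j ∈ Finset.univ.filter (fun j => d j ≠ 0), A (ρ t) j * d j := by
        refine (Finset.sum_filter_of_ne fun j _ hne => ?_).symm
        by_contra hdj
        apply hne
        simp [hdj]
      have e2 : ∑ j ∈ s, A (ρ t) j * d j = ∑ t' : Fin r, A (ρ t) (γ t') * d (γ t') := by
        rw [← himage, Finset.sum_image (fun a _ a' _ hab => hγinj hab)]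
      have e3 : Q.mulVec (fun t' => d (γ t')) t = ∑ t' : Fin r, A (ρ t) (γ t') * d (γ t') := by
        simp [Matrix.mulVec, dotProduct, hQ, hN]
      rw [e3, ← e2]
      rw [hs, ← e1, ← e0, hrow]
    have hdγ : (fun t' => d (γ t')) = Q⁻¹.mulVec (fun t => y (ρ t)) := by
      rw [← hsolve, Matrix.mulVec_mulVec, Matrix.nonsing_inv_mul Q hQdetunit,
        Matrix.one_mulVec]
    have hdbound : ∀ t' : Fin r, |d (γ t')| ≤ S ^ (k-1) * ∑ i, |y i| := by
      intro t'
      have h10 := congrFun hdγ t'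
      rw [h10]
      have e4 : Q⁻¹.mulVec (fun t => y (ρ t)) t' = ∑ t, Q⁻¹ t' t * y (ρ t) := by
        simp [Matrix.mulVec, dotProduct]
      rw [e4]
      calc |∑ t, Q⁻¹ t' t * y (ρ t)| ≤ ∑ t, |Q⁻¹ t' t * y (ρ t)| :=
            Finset.abs_sum_le_sum_abs _ _
        _ ≤ ∑ t, S^(k-1) * |y (ρ t)| := Finset.sum_le_sum fun t _ => by
            rw [abs_mul]
            exact mul_le_mul_of_nonneg_right (hQinv t' t) (abs_nonneg _)
        _ = S^(k-1) * ∑ t, |y (ρ t)| := by rw [Finset.mul_sum]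
        _ ≤ S^(k-1) * ∑ i, |y i| := by
            refine mul_le_mul_of_nonneg_left ?_ (pow_nonneg hS0 _)
            calc ∑ t, |y (ρ t)|
                = ∑ i ∈ Finset.image ρ Finset.univ, |y i| :=
                  (Finset.sum_image (f := fun i => |y i|) (g := ρ)
                    (fun a _ a' _ hab => hρinj hab)).symm
              _ ≤ ∑ i, |y i| :=
                  Finset.sum_le_sum_of_subset_of_nonneg (Finset.subset_univ _)
                    fun i _ _ => abs_nonneg _
    refine ⟨d, hdy, ?_⟩
    calc ∑ j, |d j| = ∑ j ∈ Finset.univ.filter (fun j => d j ≠ 0), |d j| := by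
          refine (Finset.sum_filter_of_ne fun j _ hne => ?_).symm
          by_contra hdj
          apply hne
          simp [hdj]
      _ = ∑ t', |d (γ t')| := by
          rw [show Finset.univ.filter (fun j => d j ≠ 0) = s from hs.symm, ← himage,
            Finset.sum_image (fun a _ a' _ hab => hγinj hab)]
      _ ≤ ∑ _t' : Fin r, S^(k-1) * ∑ i, |y i| := Finset.sum_le_sum fun t' _ => hdbound t'
      _ = (r : ℝ) * (S^(k-1) * ∑ i, |y i|) := by
          rw [Finset.sum_const, Finset.card_univ, Fintype.card_fin, nsmul_eq_mul]
      _ ≤ (k:ℝ)^2 * S^(k-1) * ∑ i, |y i| := by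
          rw [mul_assoc]
          refine mul_le_mul_of_nonneg_right ?_ (mul_nonneg (pow_nonneg hS0 _) hy0)
          have hrc : (r:ℝ) ≤ (k:ℝ) := by exact_mod_cast hrk
          have hkc : (1:ℝ) ≤ (k:ℝ) := by exact_mod_cast hk1
          nlinarith
end

section
/- Let G be a finitely generated abelian group presented as ℤ^m / L where L is generated by k vectors each with entries in {-1,0,1} and at most 3 nonzero entries. Then the torsion subgroup of G has order at most (3k)^(r/2), where r is the rank of the subgroup L. -/
/-!
Let `u` be a maximal linearly independent subfamily of the generators, spanning `L₀ ≤ L`, and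
let `S ≥ L` be the saturation of `L`, so that the torsion subgroup `T` of `ℤ^m ⧸ L` is `S ⧸ L`, a
quotient of `S ⧸ L₀`. Both `L₀` and `S` have rank `r`, and writing the basis `u` of `L₀` in a
basis of `S` multiplies the Gram determinant by the square of the base change determinant, whose
absolute value is `[S : L₀]`. The Gram determinant of a basis of `S` is a positive integer, hence
`|T|² ≤ [S : L₀]² ≤ det (u uᵀ)`. Every entry of `u uᵀ` has absolute value at most `3`, so
`det (u uᵀ) ≤ r! 3^r ≤ (3k)^r`.
-/

open Matrix Module Set

namespace AddSubgroup

variable {M : Type*} [AddCommGroup M]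

def saturation (L : AddSubgroup M) : AddSubgroup M :=
  (AddCommGroup.torsion (M ⧸ L)).comap (QuotientAddGroup.mk' L)

theorem mem_saturation_iff {L : AddSubgroup M} {x : M} :
    x ∈ L.saturation ↔ ∃ a : ℤ, a ≠ 0 ∧ a • x ∈ L := by
  simp only [saturation, mem_comap, AddCommGroup.mem_torsion, isOfFinAddOrder_iff_zsmul_eq_zero,
    QuotientAddGroup.mk'_apply, ← QuotientAddGroup.mk_zsmul, QuotientAddGroup.eq_zero_iff]

theorem le_saturation (L : AddSubgroup M) : L ≤ L.saturation :=
  fun _ hx => mem_saturation_iff.2 ⟨1, one_ne_zero, by rwa [one_zsmul]⟩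

theorem saturation_le_saturation {H L : AddSubgroup M} (h : L ≤ H.saturation) :
    L.saturation ≤ H.saturation := by
  intro x hx
  obtain ⟨a, ha, hax⟩ := mem_saturation_iff.1 hx
  obtain ⟨b, hb, hbax⟩ := mem_saturation_iff.1 (h hax)
  exact mem_saturation_iff.2 ⟨b * a, mul_ne_zero hb ha, by rwa [mul_smul]⟩

theorem card_torsion_eq_relIndex (L : AddSubgroup M) :
    Nat.card (AddCommGroup.torsion (M ⧸ L)) = L.relIndex L.saturation := by
  have h := relIndex_comap (H := ⊥) (QuotientAddGroup.mk' L) L.saturation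
  rwa [AddMonoidHom.comap_bot, QuotientAddGroup.ker_mk', saturation,
    map_comap_eq_self_of_surjective (QuotientAddGroup.mk'_surjective L), relIndex_bot_left,
    eq_comm] at h

theorem isFiniteRelIndex_of_le_saturation [Module.Finite ℤ M] {H K : AddSubgroup M}
    (h : K ≤ H.saturation) : H.IsFiniteRelIndex K := by
  have : AddGroup.FG K :=
    Module.Finite.iff_addGroup_fg.1 (inferInstanceAs (Module.Finite ℤ K.toIntSubmodule))
  have : Finite (K ⧸ H.addSubgroupOf K) := by
    refine AddCommGroup.finite_of_fg_isAddTorsion _ ?_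
    rintro ⟨x⟩
    obtain ⟨a, ha, hax⟩ := mem_saturation_iff.1 (h x.2)
    exact isOfFinAddOrder_iff_zsmul_eq_zero.2 ⟨a, ha, (QuotientAddGroup.eq_zero_iff _).2 hax⟩
  exact ⟨index_ne_zero_of_finite⟩

theorem closure_range_le_saturation_of_maximal {κ : Type*} {v : κ → M} {s : Set κ}
    (hmax : ∀ i ∉ s, ∃ a : ℤ, a ≠ 0 ∧ a • v i ∈ Submodule.span ℤ (v '' s)) :
    closure (range v) ≤ (closure (range fun j : s => v j)).saturation := by
  rw [closure_le]
  rintro _ ⟨i, rfl⟩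
  rw [SetLike.mem_coe, mem_saturation_iff]
  by_cases hi : i ∈ s
  · exact ⟨1, one_ne_zero, by simpa using subset_closure (mem_range_self (⟨i, hi⟩ : s))⟩
  · obtain ⟨a, ha, hav⟩ := hmax i hi
    refine ⟨a, ha, ?_⟩
    rwa [← Submodule.span_int_eq_addSubgroupClosure, Submodule.mem_toAddSubgroup,
      ← image_eq_range]

end AddSubgroup

namespace Matrix

variable {n : Type*} [Fintype n]

theorem abs_dotProduct_le_card_support {x y : n → ℤ} (hx : ∀ i, |x i| ≤ 1)
    (hy : ∀ i, |y i| ≤ 1) : |x ⬝ᵥ y| ≤ (Finset.univ.filter (fun i => x i ≠ 0)).card := by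
  have hterm : ∀ i, |x i * y i| ≤ if x i ≠ 0 then 1 else 0 := by
    intro i
    split_ifs with h
    · rw [abs_mul]
      nlinarith [abs_nonneg (x i), abs_nonneg (y i), hx i, hy i]
    · simp [not_not.1 h]
  calc |x ⬝ᵥ y| ≤ ∑ i, |x i * y i| := Finset.abs_sum_le_sum_abs _ _
    _ ≤ ∑ i, if x i ≠ 0 then (1 : ℤ) else 0 := Finset.sum_le_sum fun i _ => hterm i
    _ = _ := by rw [← Finset.sum_filter, Finset.sum_const, nsmul_one]

variable {ι : Type*} [Fintype ι] [DecidableEq ι]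

theorem det_mul_transpose_le {A : Matrix ι n ℤ} {c k : ℕ} (hA : ∀ i t, |A i t| ≤ 1)
    (hsupp : ∀ i, (Finset.univ.filter (fun t => A i t ≠ 0)).card ≤ c)
    (hk : Fintype.card ι ≤ k) : (A * Aᵀ).det ≤ (c * k : ℤ) ^ Fintype.card ι := by
  have hentry : ∀ i j, |(A * Aᵀ) i j| ≤ c := fun i j =>
    (abs_dotProduct_le_card_support (hA i) (hA j)).trans (by exact_mod_cast hsupp i)
  have hfact : ((Fintype.card ι).factorial : ℤ) ≤ (k : ℤ) ^ Fintype.card ι := by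
    exact_mod_cast (Nat.factorial_le_pow _).trans (Nat.pow_le_pow_left hk _)
  calc (A * Aᵀ).det ≤ |(A * Aᵀ).det| := le_abs_self _
    _ ≤ (Fintype.card ι).factorial • (c : ℤ) ^ Fintype.card ι :=
      det_le (abv := AbsoluteValue.abs) hentry
    _ ≤ (k : ℤ) ^ Fintype.card ι * (c : ℤ) ^ Fintype.card ι := by
      rw [nsmul_eq_mul]
      gcongr
    _ = (c * k : ℤ) ^ Fintype.card ι := by ring

theorem det_mul_transpose_ne_zero {K : Type*} [Field K] [LinearOrder K] [IsStrictOrderedRing K]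
    {A : Matrix ι n K} (hA : LinearIndependent K A.row) : (A * Aᵀ).det ≠ 0 := by
  have : LinearIndependent K (A * Aᵀ).row := by
    rw [linearIndependent_iff_card_eq_finrank_span, Set.finrank, ← rank_eq_finrank_span_row,
      rank_self_mul_transpose, hA.rank_matrix]
  exact ((isUnit_iff_isUnit_det _).1 (linearIndependent_rows_iff_isUnit.1 this)).ne_zero

theorem det_mul_transpose_nonneg (A : Matrix ι n ℝ) : 0 ≤ (A * Aᵀ).det := by
  simpa only [conjTranspose_eq_transpose_of_trivial] using
    (posSemidef_self_mul_conjTranspose A).det_nonneg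

theorem intCast_det_mul_transpose {R : Type*} [CommRing R] (A : Matrix ι n ℤ) :
    ((A * Aᵀ).det : R) = (A.map ((↑) : ℤ → R) * (A.map ((↑) : ℤ → R))ᵀ).det := by
  have := (Int.castRingHom R).map_det (A * Aᵀ)
  rwa [RingHom.mapMatrix_apply, Matrix.map_mul, transpose_map] at this

theorem one_le_det_mul_transpose {A : Matrix ι n ℤ} (hA : LinearIndependent ℤ A.row) :
    1 ≤ (A * Aᵀ).det := by
  have hℚ : LinearIndependent ℚ (A.map ((↑) : ℤ → ℚ)).row := by
    rw [← LinearIndependent.iff_fractionRing ℤ ℚ]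
    refine hA.map' ((Algebra.linearMap ℤ ℚ).compLeft n) (LinearMap.ker_eq_bot.2 ?_)
    intro x y h
    funext i
    simpa using congrFun h i
  have hne : ((A * Aᵀ).det : ℚ) ≠ 0 := by
    rw [intCast_det_mul_transpose]
    exact det_mul_transpose_ne_zero hℚ
  have hnonneg : (0 : ℝ) ≤ ((A * Aᵀ).det : ℝ) := by
    rw [intCast_det_mul_transpose]
    exact det_mul_transpose_nonneg _
  have : (A * Aᵀ).det ≠ 0 := by exact_mod_cast hne
  have : 0 ≤ (A * Aᵀ).det := by exact_mod_cast hnonneg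
  omega

theorem det_mul_mul_transpose {R : Type*} [CommRing R] (P : Matrix ι ι R) (A : Matrix ι n R) :
    (P * A * (P * A)ᵀ).det = P.det ^ 2 * (A * Aᵀ).det := by
  rw [transpose_mul, ← Matrix.mul_assoc, Matrix.mul_assoc P, det_mul, det_mul, det_transpose]
  ring

end Matrix

namespace AddSubgroup

noncomputable def basisClosureRange {ι n : Type*} {u : ι → n → ℤ} (hu : LinearIndependent ℤ u) :
    Basis ι ℤ (closure (range u)).toIntSubmodule :=
  (Basis.span hu).map (LinearEquiv.ofEq _ _ (toIntSubmodule_closure _).symm)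

theorem basisClosureRange_apply {ι n : Type*} {u : ι → n → ℤ} (hu : LinearIndependent ℤ u)
    (i : ι) : (basisClosureRange hu i : n → ℤ) = u i := by
  simp [basisClosureRange, Basis.span_apply]

variable {ι n : Type*} [Fintype ι] [Fintype n]

theorem finrank_eq_card_of_isFiniteRelIndex {u : ι → n → ℤ} (hu : LinearIndependent ℤ u)
    {K : AddSubgroup (n → ℤ)} (hK : closure (range u) ≤ K)
    [(closure (range u)).IsFiniteRelIndex K] : finrank ℤ K.toIntSubmodule = Fintype.card ι := by
  have : Module.Finite ℤ K := inferInstanceAs (Module.Finite ℤ K.toIntSubmodule)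
  have : IsTorsionFree ℤ K := inferInstanceAs (IsTorsionFree ℤ K.toIntSubmodule)
  rw [← finrank_eq_card_basis (basisClosureRange hu)]
  exact (finrank_eq_of_isFiniteRelIndex hK).symm

theorem finrank_eq_card_of_le_saturation {u : ι → n → ℤ} (hu : LinearIndependent ℤ u)
    {L : AddSubgroup (n → ℤ)} (huL : ∀ i, u i ∈ L) (hL : L ≤ (closure (range u)).saturation) :
    finrank ℤ L.toIntSubmodule = Fintype.card ι :=
  have := isFiniteRelIndex_of_le_saturation hL
  finrank_eq_card_of_isFiniteRelIndex hu ((closure_le _).2 (range_subset_iff.2 huL))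

variable [DecidableEq ι]

theorem relIndex_sq_mul_det_eq {H K : AddSubgroup (n → ℤ)} (hHK : H ≤ K)
    (bH : Basis ι ℤ H.toIntSubmodule) (bK : Basis ι ℤ K.toIntSubmodule) :
    (H.relIndex K : ℤ) ^ 2 *
        (of (fun i => (bK i : n → ℤ)) * (of (fun i => (bK i : n → ℤ)))ᵀ).det =
      (of (fun i => (bH i : n → ℤ)) * (of (fun i => (bH i : n → ℤ)))ᵀ).det := by
  set P := bK.toMatrix (fun i => ⟨bH i, hHK (bH i).2⟩)
  have hrows : of (fun i => (bH i : n → ℤ)) = Pᵀ * of (fun i => (bK i : n → ℤ)) := by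
    ext i t
    have := congrArg (fun x : K.toIntSubmodule => (x : n → ℤ) t)
      (bK.sum_repr ⟨bH i, hHK (bH i).2⟩)
    simp only [Submodule.coe_sum, Submodule.coe_smul, Finset.sum_apply, Pi.smul_apply] at this
    simpa [Matrix.mul_apply, P, Basis.toMatrix_apply] using this.symm
  rw [relIndex_eq_natAbs_det H K hHK bH bK, Int.natCast_natAbs, sq_abs, Basis.det_apply, hrows,
    det_mul_mul_transpose, det_transpose]

theorem card_torsion_sq_le_det {u : ι → n → ℤ} (hu : LinearIndependent ℤ u)
    {L : AddSubgroup (n → ℤ)} (huL : ∀ i, u i ∈ L) (hL : L ≤ (closure (range u)).saturation) :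
    (Nat.card (AddCommGroup.torsion ((n → ℤ) ⧸ L)) : ℤ) ^ 2 ≤ (of u * (of u)ᵀ).det := by
  set H := closure (range u)
  set S := L.saturation
  have hHL : H ≤ L := (closure_le _).2 (range_subset_iff.2 huL)
  have hHS : H ≤ S := hHL.trans L.le_saturation
  have := isFiniteRelIndex_of_le_saturation (saturation_le_saturation hL)
  let bS : Basis ι ℤ S.toIntSubmodule :=
    (finBasisOfFinrankEq ℤ _ (finrank_eq_card_of_isFiniteRelIndex hu hHS)).reindex
      (Fintype.equivFin ι).symm
  have hbS : LinearIndependent ℤ (of fun i => (bS i : n → ℤ)).row :=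
    bS.linearIndependent.map' S.toIntSubmodule.subtype (Submodule.ker_subtype _)
  have hcard : Nat.card (AddCommGroup.torsion ((n → ℤ) ⧸ L)) ≤ H.relIndex S := by
    rw [card_torsion_eq_relIndex]
    exact Nat.le_of_dvd (Nat.pos_of_ne_zero relIndex_ne_zero) (relIndex_dvd_of_le_left S hHL)
  have hrows : (of fun i => (basisClosureRange hu i : n → ℤ)) = of u := by
    ext i t
    simp [basisClosureRange_apply]
  calc (Nat.card (AddCommGroup.torsion ((n → ℤ) ⧸ L)) : ℤ) ^ 2 ≤ (H.relIndex S : ℤ) ^ 2 := by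
        gcongr
    _ ≤ (H.relIndex S : ℤ) ^ 2 *
        (of (fun i => (bS i : n → ℤ)) * (of (fun i => (bS i : n → ℤ)))ᵀ).det :=
      le_mul_of_one_le_right (sq_nonneg _) (one_le_det_mul_transpose hbS)
    _ = (of u * (of u)ᵀ).det := by
      rw [relIndex_sq_mul_det_eq hHS (basisClosureRange hu) bS, hrows]

end AddSubgroup

theorem le_rpow_half_of_sq_le_pow {x y : ℝ} (hx : 0 ≤ x) (hy : 0 ≤ y) {r : ℕ}
    (h : x ^ 2 ≤ y ^ r) : x ≤ y ^ ((r : ℝ) / 2) :=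
  calc x = √(x ^ 2) := (Real.sqrt_sq hx).symm
    _ ≤ √(y ^ r) := Real.sqrt_le_sqrt h
    _ = y ^ ((r : ℝ) / 2) := by
      rw [Real.sqrt_eq_rpow, ← Real.rpow_natCast, ← Real.rpow_mul hy, mul_one_div]

/-- Let `G = ℤ^m / L` where `L` is generated by `k` vectors each with entries in
{-1,0,1} and at most 3 nonzero entries.  Then the torsion subgroup of `G` has order
at most `(3k)^(r/2)`, where `r` is the rank of `L`. -/
theorem stmt17 (m k : ℕ) (v : Fin k → (Fin m → ℤ))
    (hentries : ∀ j i, v j i = -1 ∨ v j i = 0 ∨ v j i = 1)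
    (hnonzero : ∀ j, (Finset.univ.filter (fun i => v j i ≠ 0)).card ≤ 3)
    (L : AddSubgroup (Fin m → ℤ)) (hL : L = AddSubgroup.closure (Set.range v))
    (r : ℕ) (hr : Module.finrank ℤ (AddSubgroup.toIntSubmodule L) = r) :
    ((Nat.card (AddCommGroup.torsion ((Fin m → ℤ) ⧸ L)) : ℝ)) ≤
      (3 * (k : ℝ)) ^ ((r : ℝ) / 2) := by
  classical
  subst hL hr
  obtain ⟨s, hs, hmax⟩ := exists_maximal_linearIndepOn ℤ v
  have huL : ∀ j : s, v j ∈ AddSubgroup.closure (range v) :=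
    fun j => AddSubgroup.subset_closure (mem_range_self _)
  have hLsat := AddSubgroup.closure_range_le_saturation_of_maximal hmax
  have hsk : Fintype.card s ≤ k :=
    (Fintype.card_le_of_injective _ Subtype.val_injective).trans_eq (Fintype.card_fin k)
  have hgram : ((of fun j : s => v j) * (of fun j : s => v j)ᵀ).det ≤
      (3 * k : ℤ) ^ Fintype.card s :=
    det_mul_transpose_le (fun j t => by rcases hentries j t with h | h | h <;> simp [h])
      (hnonzero ·) hsk
  rw [AddSubgroup.finrank_eq_card_of_le_saturation hs huL hLsat]
  refine le_rpow_half_of_sq_le_pow (Nat.cast_nonneg _) (by positivity) ?_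
  exact_mod_cast (AddSubgroup.card_torsion_sq_le_det hs huL hLsat).trans hgram
end
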